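/- For the games G = {{c|b|.}|a|.} and H = {.|d|{.|e|{.|f|g}}}, the final scores satisfy G_F^{SL} = b, G_F^{SR} = a, H_F^{SL} = d, H_F^{SR} = e, while under the selective sum (G ▽ H)_F^{SL} = c + f and (G ▽ H)_F^{SR} = c + g. Consequently, for any three outcome classes X, Y, Z there exist scoring games G ∈ X, H ∈ Y with G ▽ H ∈ Z. -/

import Mathlib

inductive SGame : Type where
  | mk (score : ℝ) (L R : List SGame)

namespace SGame

def score : SGame → ℝ | .mk s _ _ => s
def L : SGame → List SGame | .mk _ l _ => l
def R : SGame → List SGame | .mk _ _ r => r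

mutual
  noncomputable def leftScore : SGame → ℝ
    | .mk s l _ => ((l.attach.map fun x => rightScore x.1).maximum).unbotD s
  termination_by g => sizeOf g
  decreasing_by
    have := List.sizeOf_lt_of_mem x.2
    simp only [SGame.mk.sizeOf_spec]
    omega
  noncomputable def rightScore : SGame → ℝ
    | .mk s _ r => ((r.attach.map fun x => leftScore x.1).minimum).untopD s
  termination_by g => sizeOf g
  decreasing_by
    have := List.sizeOf_lt_of_mem x.2
    simp only [SGame.mk.sizeOf_spec]
    omega
end

/-- Conjunctive sum: move in all components simultaneously. -/
def conj : SGame → SGame → SGame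
  | .mk s l r, .mk t l' r' =>
    .mk (s + t)
      (l.attach.flatMap fun x => l'.attach.map fun y => conj x.1 y.1)
      (r.attach.flatMap fun x => r'.attach.map fun y => conj x.1 y.1)
termination_by G H => sizeOf G + sizeOf H
decreasing_by
  all_goals
    have h1 := List.sizeOf_lt_of_mem x.2
    have h2 := List.sizeOf_lt_of_mem y.2
    simp only [SGame.mk.sizeOf_spec]
    omega

/-- Selective sum: move in any nonempty subset of the components. -/
def sel : SGame → SGame → SGame
  | .mk s l r, .mk t l' r' =>
    .mk (s + t)
      ((l.attach.map fun x => sel x.1 (.mk t l' r')) ++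
       (l'.attach.map fun y => sel (.mk s l r) y.1) ++
       (l.attach.flatMap fun x => l'.attach.map fun y => sel x.1 y.1))
      ((r.attach.map fun x => sel x.1 (.mk t l' r')) ++
       (r'.attach.map fun y => sel (.mk s l r) y.1) ++
       (r.attach.flatMap fun x => r'.attach.map fun y => sel x.1 y.1))
termination_by G H => sizeOf G + sizeOf H
decreasing_by
  all_goals first
  | (have h1 := List.sizeOf_lt_of_mem x.2
     have h2 := List.sizeOf_lt_of_mem y.2
     simp only [SGame.mk.sizeOf_spec]; omega)
  | (have h1 := List.sizeOf_lt_of_mem x.2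
     simp only [SGame.mk.sizeOf_spec]; omega)
  | (have h2 := List.sizeOf_lt_of_mem y.2
     simp only [SGame.mk.sizeOf_spec]; omega)

/-- Add `a` points (for Left) to every score of the game. -/
def addScore (a : ℝ) : SGame → SGame
  | .mk s l r => .mk (a + s) (l.attach.map fun x => addScore a x.1)
      (r.attach.map fun x => addScore a x.1)
termination_by g => sizeOf g
decreasing_by
  all_goals
    have := List.sizeOf_lt_of_mem x.2
    simp only [SGame.mk.sizeOf_spec]; omega

/-- The negative of a game: swap the roles of Left and Right and negate all scores. -/
def neg : SGame → SGame
  | .mk s l r => .mk (-s) (r.attach.map fun x => neg x.1) (l.attach.map fun x => neg x.1)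
termination_by g => sizeOf g
decreasing_by
  all_goals
    have := List.sizeOf_lt_of_mem x.2
    simp only [SGame.mk.sizeOf_spec]; omega

/-- Impartial scoring game. -/
def Impartial : SGame → Prop
  | .mk s l r =>
    (l = [] ↔ r = []) ∧
    (∀ x ∈ l, ∃ y ∈ r, addScore (-s) x = neg (addScore (-s) y)) ∧
    (∀ x ∈ l.attach, Impartial x.1) ∧ (∀ y ∈ r.attach, Impartial y.1)
termination_by g => sizeOf g
decreasing_by
  all_goals
    first
    | (have := List.sizeOf_lt_of_mem x.2
       simp only [SGame.mk.sizeOf_spec]; omega)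
    | (have := List.sizeOf_lt_of_mem y.2
       simp only [SGame.mk.sizeOf_spec]; omega)

/-- Sequential join: play all of `G` first, then continue in `H`
    with the accumulated score. -/
def seq : SGame → SGame → SGame
  | .mk s [] [], H => addScore s H
  | .mk s l r, H =>
    .mk (s + H.score) (l.attach.map fun x => seq x.1 H)
      (r.attach.map fun x => seq x.1 H)
termination_by G _ => sizeOf G
decreasing_by
  all_goals
    have := List.sizeOf_lt_of_mem x.2
    simp only [SGame.mk.sizeOf_spec]; omega

/-- Outcome classes for scoring games. -/
inductive Outcome : Type where
  | L | R | N | P | Tie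
deriving DecidableEq

open Classical in
/-- The outcome class of a scoring game, determined by the signs of the
    optimal final scores with Left, resp. Right, moving first. -/
noncomputable def outcome (G : SGame) : Outcome :=
  if 0 < leftScore G ∧ rightScore G < 0 then .N
  else if leftScore G < 0 ∧ 0 < rightScore G then .P
  else if leftScore G = 0 ∧ rightScore G = 0 then .Tie
  else if 0 ≤ leftScore G ∧ 0 ≤ rightScore G then .L
  else .R

end SGame


/-!
Since `G` has only Left moves and `H` only Right moves, no move of `G ▽ H` is made in both
components, so each player is confined to their own component and the play just interleaves the
two. With Left starting: Left to `{c|b|.}`, Right to `{.|e|{.|f|g}}`, Left to `c`, Right to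
`{.|f|g}`, and Left is stuck at `c + f`; with Right starting the same play ends one move later at
`c + g`. The scores `a, b` fix the class of `G`, `d, e` that of `H`, and (with `c = 0`) `f, g`
that of `G ▽ H`, independently of one another.
-/

namespace SGame

@[simp] lemma leftScore_mk_nil (s : ℝ) (r : List SGame) : leftScore (.mk s [] r) = s := by
  simp [leftScore]

@[simp] lemma leftScore_mk_singleton (s : ℝ) (x : SGame) (r : List SGame) :
    leftScore (.mk s [x] r) = rightScore x := by
  simp [leftScore]

@[simp] lemma rightScore_mk_nil (s : ℝ) (l : List SGame) : rightScore (.mk s l []) = s := by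
  simp [rightScore]

@[simp] lemma rightScore_mk_singleton (s : ℝ) (l : List SGame) (x : SGame) :
    rightScore (.mk s l [x]) = leftScore x := by
  simp [rightScore]

lemma sel_mk_nil_mk_nil (s t : ℝ) (l r : List SGame) :
    sel (.mk s l []) (.mk t [] r) =
      .mk (s + t) (l.map (sel · (.mk t [] r))) (r.map (sel (.mk s l []) ·)) := by
  rw [sel]
  simp

lemma sel_example_scores (a b c d e f g : ℝ) :
    let G : SGame := .mk a [.mk b [.mk c [] []] []] []
    let H : SGame := .mk d [] [.mk e [] [.mk f [] [.mk g [] []]]]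
    leftScore G = b ∧ rightScore G = a ∧ leftScore H = d ∧ rightScore H = e ∧
      leftScore (sel G H) = c + f ∧ rightScore (sel G H) = c + g := by
  simp [sel_mk_nil_mk_nil]

/-- A pair `(leftScore, rightScore)` realising the outcome class. -/
def Outcome.scores : Outcome → ℝ × ℝ
  | .N => (1, -1)
  | .P => (-1, 1)
  | .Tie => (0, 0)
  | .L => (1, 1)
  | .R => (-1, -1)

lemma outcome_eq_of_scores {O : Outcome} {G : SGame} (hl : leftScore G = O.scores.1)
    (hr : rightScore G = O.scores.2) : outcome G = O := by
  cases O <;> norm_num [outcome, hl, hr, Outcome.scores]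

end SGame

open SGame in
/-- For `G = {{c|b|.}|a|.}` and `H = {.|d|{.|e|{.|f|g}}}`: the stated final score
computations under the selective sum, and consequently the outcome classes of
`G`, `H` and `G ▽ H` are completely independent. -/
theorem sel_outcomes_independent :
    (∀ a b c d e f g : ℝ,
      let G : SGame := .mk a [.mk b [.mk c [] []] []] []
      let H : SGame := .mk d [] [.mk e [] [.mk f [] [.mk g [] []]]]
      leftScore G = b ∧ rightScore G = a ∧ leftScore H = d ∧ rightScore H = e ∧
        leftScore (sel G H) = c + f ∧ rightScore (sel G H) = c + g) ∧
    (∀ X Y Z : SGame.Outcome, ∃ G H : SGame,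
      outcome G = X ∧ outcome H = Y ∧ outcome (sel G H) = Z) := by
  refine ⟨sel_example_scores, fun X Y Z => ?_⟩
  obtain ⟨hGl, hGr, hHl, hHr, hSl, hSr⟩ :=
    sel_example_scores X.scores.2 X.scores.1 0 Y.scores.1 Y.scores.2 Z.scores.1 Z.scores.2
  exact ⟨_, _, outcome_eq_of_scores hGl hGr, outcome_eq_of_scores hHl hHr,
    outcome_eq_of_scores (hSl.trans (zero_add _)) (hSr.trans (zero_add _))⟩
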